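/- arXiv:math-ph/0201005 — 3 statements merged into one kernel-verified Lean document; each statement's English description precedes it below -/
import Mathlib

section
/- Let H be a complex Hilbert space and u a strongly continuous one-parameter unitary group on H. Let E = ℓ²(ℕ, H) be the Hilbert space of square-summable H-valued sequences, and for t ∈ ℝ let ũ(t) : E → E be the (unitary) operator acting componentwise, (ũ(t)ξ)_l = u(t)(ξ_l). Let ξ, η ∈ E. Then the E-valued map t ↦ ũ(t)ξ is differentiable at t = 0 with derivative η if and only if for every l ∈ ℕ the H-valued map t ↦ u(t)(ξ_l) is differentiable at t = 0 with derivative η_l. Consequently, the domain of the generator of the amplified group ũ consists precisely of those ξ = (ξ_l) such that each ξ_l lies in the domain of the generator d of u and Σ_l ‖d(ξ_l)‖² < ∞. -/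
/-!
Evaluation at a coordinate is a continuous linear map on `ℓ²`, which gives one direction.
Conversely, the group law makes the orbit `t ↦ u(t)ξ_l` differentiable everywhere with
derivative `u(s)η_l` of norm `‖η_l‖`, so the mean value inequality gives
`‖u(t)ξ_l - ξ_l‖ ≤ |t| ‖η_l‖`. Hence the `l`-th coordinate of each difference quotient minus `η`
is bounded by `2‖η_l‖`, a square-summable bound independent of `t`, and dominated convergence
for series upgrades coordinatewise convergence to convergence in `ℓ²`.
-/

open Filter Topology

namespace lp

variable {α : Type*} {E : α → Type*} [∀ i, NormedAddCommGroup (E i)] {p : ENNReal} [Fact (1 ≤ p)]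

theorem tendsto_zero_of_tendsto_apply_of_norm_le {β : Type*} {l : Filter β} {F : β → lp E p}
    (hp : p ≠ ⊤) {b : α → ℝ} (hb : Memℓp b p) (hF : ∀ i, Tendsto (fun x => F x i) l (𝓝 0))
    (hFb : ∀ᶠ x in l, ∀ i, ‖F x i‖ ≤ b i) : Tendsto F l (𝓝 0) := by
  have hp0 : 0 < p.toReal := ENNReal.toReal_pos (zero_lt_one.trans_le Fact.out).ne' hp
  have hsum : Tendsto (fun x => ∑' i, ‖F x i‖ ^ p.toReal) l (𝓝 0) := by
    have hdom := tendsto_tsum_of_dominated_convergence (hb.summable hp0)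
      (fun i => by simpa [Real.zero_rpow hp0.ne'] using ((hF i).norm.rpow_const (Or.inr hp0.le)))
      (hFb.mono fun x hx i => by
        rw [Real.norm_of_nonneg (by positivity)]
        exact Real.rpow_le_rpow (norm_nonneg _) ((hx i).trans (Real.le_norm_self _)) hp0.le)
    rwa [tsum_zero] at hdom
  rw [tendsto_zero_iff_norm_tendsto_zero]
  have hroot := hsum.rpow_const (p := p.toReal⁻¹) (Or.inr (inv_nonneg.2 hp0.le))
  rw [Real.zero_rpow (inv_ne_zero hp0.ne')] at hroot
  refine hroot.congr fun x => ?_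
  rw [← norm_rpow_eq_tsum hp0, Real.rpow_rpow_inv (norm_nonneg _) hp0.ne']

variable [∀ i, NormedSpace ℝ (E i)]

theorem hasDerivAt_apply {F : ℝ → lp E p} {η : lp E p} {a : ℝ} (h : HasDerivAt F η a) (i : α) :
    HasDerivAt (fun t => F t i) (η i) a :=
  (evalCLM ℝ E p i).hasFDerivAt.comp_hasDerivAt a h

theorem slope_apply (F : ℝ → lp E p) (a t : ℝ) (i : α) :
    slope F a t i = slope (fun t => F t i) a t :=
  (evalₗ (𝕜 := ℝ) E p i).slope_comp F a t

theorem hasDerivAt_of_hasDerivAt_apply {F : ℝ → lp E p} {η : lp E p} {a : ℝ} (hp : p ≠ ⊤)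
    {b : α → ℝ} (hb : Memℓp b p) (hFb : ∀ t i, ‖slope (fun t => F t i) a t - η i‖ ≤ b i)
    (h : ∀ i, HasDerivAt (fun t => F t i) (η i) a) : HasDerivAt F η a := by
  rw [hasDerivAt_iff_tendsto_slope, ← tendsto_sub_nhds_zero_iff]
  refine tendsto_zero_of_tendsto_apply_of_norm_le hp hb (fun i => ?_)
    (Eventually.of_forall fun t i => ?_)
  · simpa [slope_apply] using tendsto_sub_nhds_zero_iff.2 (h i).tendsto_slope
  · simpa [slope_apply] using hFb t i

end lp

section OneParameterGroup

variable {E : Type*} [NormedAddCommGroup E] [NormedSpace ℝ E] {u : ℝ → E →L[ℝ] E} {x y : E}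

theorem hasDerivAt_orbit (hu_add : ∀ s t x, u (s + t) x = u s (u t x))
    (h : HasDerivAt (fun t => u t x) y 0) (s : ℝ) :
    HasDerivAt (fun t => u t x) (u s y) s := by
  have hshift : HasDerivAt (fun t => u (t - s) x) y s :=
    HasDerivAt.comp_sub_const (f := fun t => u t x) s s (by rwa [sub_self])
  convert (u s).hasFDerivAt.comp_hasDerivAt s hshift using 1
  funext t
  simp [← hu_add]

theorem norm_orbit_sub_le (hu_le : ∀ t x, ‖u t x‖ ≤ ‖x‖) (hu_zero : ∀ x, u 0 x = x)
    (hu_add : ∀ s t x, u (s + t) x = u s (u t x)) (h : HasDerivAt (fun t => u t x) y 0)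
    (t : ℝ) : ‖u t x - x‖ ≤ ‖y‖ * |t| := by
  have hmvt := convex_univ.norm_image_sub_le_of_norm_hasDerivWithin_le
    (fun s _ => (hasDerivAt_orbit hu_add h s).hasDerivWithinAt) (fun s _ => hu_le s y)
    (Set.mem_univ 0) (Set.mem_univ t)
  simpa [hu_zero] using hmvt

theorem norm_slope_orbit_sub_le (hu_le : ∀ t x, ‖u t x‖ ≤ ‖x‖) (hu_zero : ∀ x, u 0 x = x)
    (hu_add : ∀ s t x, u (s + t) x = u s (u t x)) (h : HasDerivAt (fun t => u t x) y 0)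
    (t : ℝ) : ‖slope (fun t => u t x) 0 t - y‖ ≤ 2 * ‖y‖ := by
  have hslope : ‖slope (fun t => u t x) 0 t‖ ≤ ‖y‖ := by
    rw [slope_def_module, sub_zero, hu_zero, norm_smul, norm_inv, Real.norm_eq_abs]
    calc |t|⁻¹ * ‖u t x - x‖ ≤ |t|⁻¹ * (‖y‖ * |t|) := by
          gcongr; exact norm_orbit_sub_le hu_le hu_zero hu_add h t
      _ ≤ ‖y‖ := by
          rcases eq_or_ne t 0 with rfl | ht
          · simp
          · rw [mul_comm ‖y‖, inv_mul_cancel_left₀ (abs_ne_zero.2 ht)]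
  linarith [norm_sub_le (slope (fun t => u t x) 0 t) y]

end OneParameterGroup

theorem amplified_group_hasDerivAt_iff_general
    {H : Type*} [NormedAddCommGroup H] [InnerProductSpace ℂ H]
    (u : ℝ → H →L[ℂ] H)
    (hu_iso : ∀ t (x : H), ‖u t x‖ = ‖x‖)
    (hu_zero : ∀ x : H, u 0 x = x)
    (hu_add : ∀ s t (x : H), u (s + t) x = u s (u t x))
    (U : ℝ → lp (fun _ : ℕ => H) 2 → lp (fun _ : ℕ => H) 2)
    (hU : ∀ (t : ℝ) (ξ : lp (fun _ : ℕ => H) 2) (l : ℕ), (U t ξ) l = u t (ξ l))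
    (ξ η : lp (fun _ : ℕ => H) 2) :
    HasDerivAt (fun t => U t ξ) η 0 ↔
      ∀ l : ℕ, HasDerivAt (fun t => u t (ξ l)) (η l) 0 := by
  refine ⟨fun h l => by simpa only [hU] using lp.hasDerivAt_apply h l, fun h => ?_⟩
  refine lp.hasDerivAt_of_hasDerivAt_apply ENNReal.ofNat_ne_top ((lp.memℓp η).norm.const_mul 2)
    (fun t l => ?_) (fun l => by simpa only [hU] using h l)
  simp only [hU]
  exact norm_slope_orbit_sub_le (u := fun t => (u t).restrictScalars ℝ)
    (fun t x => (hu_iso t x).le) hu_zero hu_add (h l) t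

/-- For the componentwise amplification `ũ` of a strongly continuous one-parameter unitary
group `u` to `E = ℓ²(ℕ, H)`, a vector-valued map `t ↦ ũ(t)ξ` is differentiable at `0` with
derivative `η ∈ E` iff each component `t ↦ u(t)ξ_l` is differentiable at `0` with derivative
`η_l` (Lemma 2.6(ii) of the paper). -/
theorem amplified_group_hasDerivAt_iff
    {H : Type*} [NormedAddCommGroup H] [InnerProductSpace ℂ H] [CompleteSpace H]
    (u : ℝ → H →L[ℂ] H)
    (hu_iso : ∀ t (x : H), ‖u t x‖ = ‖x‖)
    (hu_surj : ∀ t, Function.Surjective (u t))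
    (hu_zero : ∀ x : H, u 0 x = x)
    (hu_add : ∀ s t (x : H), u (s + t) x = u s (u t x))
    (hu_cont : ∀ x : H, Continuous fun t => u t x)
    (U : ℝ → lp (fun _ : ℕ => H) 2 → lp (fun _ : ℕ => H) 2)
    (hU : ∀ (t : ℝ) (ξ : lp (fun _ : ℕ => H) 2) (l : ℕ), (U t ξ) l = u t (ξ l))
    (ξ η : lp (fun _ : ℕ => H) 2) :
    HasDerivAt (fun t => U t ξ) η 0 ↔
      ∀ l : ℕ, HasDerivAt (fun t => u t (ξ l)) (η l) 0 :=
  amplified_group_hasDerivAt_iff_general u hu_iso hu_zero hu_add U hU ξ η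
end

section
/- Fix positive integers N and m, and let H be a complex Hilbert space. Denote by W_m the set of all words w = (i₁,…,i_k) over the alphabet {1,…,N} of length k ≤ m, including the empty word. For a word w of length k and a subset J ⊆ {1,…,k}, let w_J denote the subword of w consisting of the letters of w at the positions belonging to J, taken in increasing order of position, and let Jᶜ = {1,…,k} ∖ J. Suppose given a family of bounded linear operators X_w ∈ B(H) (w ∈ W_m), a family of vectors v_w ∈ H (w ∈ W_m), and a family of vectors ζ_w ∈ H (w ∈ W_m) such that for every word w ∈ W_m of length k one has ζ_w = Σ_{J ⊆ {1,…,k}} X_{w_J}(v_{w_{Jᶜ}}). Then (Σ_{w ∈ W_m} ‖ζ_w‖²)^{1/2} ≤ √(2/(4N−1)) · (2√N)^{m+1} · (Σ_{w ∈ W_m} ‖X_w‖) · (Σ_{w ∈ W_m} ‖v_w‖²)^{1/2}. -/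
/-!
The triangle inequality and the operator norm give `‖ζ_w‖ ≤ Σ_J ‖X_{w_J}‖ ‖v_{w_Jᶜ}‖`.
For fixed `k` and `J ⊆ {1,…,k}`, `w ↦ (w_J, w_Jᶜ)` is a bijection from words of length `k`
onto pairs of words of lengths `|J|` and `k - |J|`, so the `ℓ²`-norm over `|w| = k` of the
`J`-th term factorises. Bounding the `ℓ²`-norm of the `X`-factor by its `ℓ¹`-norm and applying
Minkowski's inequality over the `2 ^ k` sets `J` gives
`(Σ_{|w| = k} ‖ζ_w‖²)^{1/2} ≤ 2 ^ k (Σ_w ‖X_w‖) (Σ_w ‖v_w‖²)^{1/2}`. Summing squares over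
`k ≤ m` leaves the constant `(4 ^ (m + 1) - 1) / 3 ≤ 2 (4N) ^ (m + 1) / (4N - 1)`.
-/

/-- The subword of `w` consisting of the letters of `w` at the positions belonging to `J`,
taken in increasing order of position. -/
def wordSelect {N : ℕ} (w : List (Fin N)) (J : Finset (Fin w.length)) : List (Fin N) :=
  (J.sort (· ≤ ·)).map w.get

open Finset

section Words

variable {α : Type*}

lemma sum_sort_map_congr {M : Type*} [AddCommMonoid M] {n k : ℕ} (h : n = k)
    {g : Fin n → α} {f : Fin k → α} (hgf : ∀ i, g i = f (finCongr h i))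
    (F : List α → List α → M) :
    ∑ J : Finset (Fin n), F ((J.sort (· ≤ ·)).map g) ((Jᶜ.sort (· ≤ ·)).map g) =
      ∑ S : Finset (Fin k), F ((S.sort (· ≤ ·)).map f) ((Sᶜ.sort (· ≤ ·)).map f) := by
  subst h
  obtain rfl : g = f := funext hgf
  rfl

lemma sum_wordSelect_ofFn {M : Type*} [AddCommMonoid M] {N k : ℕ} (f : Fin k → Fin N)
    (F : List (Fin N) → List (Fin N) → M) :
    ∑ J, F (wordSelect (List.ofFn f) J) (wordSelect (List.ofFn f) Jᶜ) =
      ∑ S : Finset (Fin k), F ((S.sort (· ≤ ·)).map f) ((Sᶜ.sort (· ≤ ·)).map f) :=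
  sum_sort_map_congr List.length_ofFn (fun i => List.get_ofFn f i) F

lemma map_sort_eq_ofFn {k : ℕ} (S : Finset (Fin k)) (f : Fin k → α) :
    (S.sort (· ≤ ·)).map f = List.ofFn (f ∘ S.orderEmbOfFin rfl) := by
  apply List.ext_getElem <;> simp [orderEmbOfFin_apply]

lemma sum_mul_sort_map_compl {R : Type*} [CommSemiring R] [Fintype α] {k : ℕ}
    (S : Finset (Fin k)) (F G : List α → R) :
    ∑ f : Fin k → α, F ((S.sort (· ≤ ·)).map f) * G ((Sᶜ.sort (· ≤ ·)).map f) =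
      (∑ g : Fin #S → α, F (List.ofFn g)) * ∑ g : Fin #Sᶜ → α, G (List.ofFn g) := by
  classical
  let restrict : (Fin k → α) → (Fin #S → α) × (Fin #Sᶜ → α) :=
    fun f => (f ∘ S.orderEmbOfFin rfl, f ∘ Sᶜ.orderEmbOfFin rfl)
  have hinj : restrict.Injective := by
    intro f f' hff
    funext x
    by_cases hx : x ∈ S
    · obtain ⟨i, rfl⟩ : x ∈ Set.range (S.orderEmbOfFin rfl) := by simpa using hx
      exact congrFun (congrArg Prod.fst hff) i
    · obtain ⟨i, rfl⟩ : x ∈ Set.range (Sᶜ.orderEmbOfFin rfl) := by simpa using hx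
      exact congrFun (congrArg Prod.snd hff) i
  have hcard : Fintype.card (Fin k → α) = Fintype.card ((Fin #S → α) × (Fin #Sᶜ → α)) := by
    simp [← pow_add, card_add_card_compl]
  rw [sum_mul_sum, ← Fintype.sum_prod_type']
  exact Fintype.sum_bijective restrict
    ((Fintype.bijective_iff_injective_and_card _).2 ⟨hinj, hcard⟩) _ _
    fun f => by simp only [restrict, map_sort_eq_ofFn]

end Words

lemma sqrt_sum_sq_sum_le {ι κ : Type*} [Fintype ι] [Fintype κ] (a : ι → κ → ℝ) :
    √(∑ i, (∑ j, a i j) ^ 2) ≤ ∑ j, √(∑ i, a i j ^ 2) := by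
  let u : κ → EuclideanSpace ℝ ι := fun j => WithLp.toLp 2 (fun i => a i j)
  have hnorm : ∀ x : EuclideanSpace ℝ ι, ‖x‖ = √(∑ i, x i ^ 2) := fun x => by
    simp [EuclideanSpace.norm_eq]
  have := norm_sum_le Finset.univ u
  simpa [hnorm, u] using this

lemma sum_sq_ofFn_le_four_pow [Fintype α] (x y z : List α → ℝ) (hx : ∀ l, 0 ≤ x l)
    (hz : ∀ l, 0 ≤ z l) {k : ℕ} {A B : ℝ}
    (hA : ∀ j ≤ k, ∑ g : Fin j → α, x (List.ofFn g) ≤ A)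
    (hB : ∀ j ≤ k, ∑ g : Fin j → α, y (List.ofFn g) ^ 2 ≤ B)
    (hxyz : ∀ f : Fin k → α, z (List.ofFn f) ≤
      ∑ S : Finset (Fin k), x ((S.sort (· ≤ ·)).map f) * y ((Sᶜ.sort (· ≤ ·)).map f)) :
    ∑ f : Fin k → α, z (List.ofFn f) ^ 2 ≤ 4 ^ k * (A ^ 2 * B) := by
  have hA0 : 0 ≤ A := (sum_nonneg fun _ _ => hx _).trans (hA 0 k.zero_le)
  have hB0 : 0 ≤ B := (sum_nonneg fun _ _ => sq_nonneg _).trans (hB 0 k.zero_le)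
  have hterm : ∀ S : Finset (Fin k), √(∑ f : Fin k → α,
      (x ((S.sort (· ≤ ·)).map f) * y ((Sᶜ.sort (· ≤ ·)).map f)) ^ 2) ≤ A * √B := by
    intro S
    simp_rw [mul_pow]
    rw [sum_mul_sort_map_compl S (fun l => x l ^ 2) (fun l => y l ^ 2),
      Real.sqrt_mul (sum_nonneg fun _ _ => sq_nonneg _)]
    gcongr
    · calc √(∑ g : Fin #S → α, x (List.ofFn g) ^ 2)
          ≤ √((∑ g : Fin #S → α, x (List.ofFn g)) ^ 2) :=
            Real.sqrt_le_sqrt (sum_sq_le_sq_sum_of_nonneg fun _ _ => hx _)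
        _ = ∑ g : Fin #S → α, x (List.ofFn g) := Real.sqrt_sq (sum_nonneg fun _ _ => hx _)
        _ ≤ A := hA _ (card_le_univ S |>.trans_eq (Fintype.card_fin k))
    · exact hB _ (card_le_univ Sᶜ |>.trans_eq (Fintype.card_fin k))
  have hsqrt : √(∑ f : Fin k → α, z (List.ofFn f) ^ 2) ≤ 2 ^ k * (A * √B) :=
    calc √(∑ f : Fin k → α, z (List.ofFn f) ^ 2)
        ≤ √(∑ f : Fin k → α, (∑ S : Finset (Fin k),
            x ((S.sort (· ≤ ·)).map f) * y ((Sᶜ.sort (· ≤ ·)).map f)) ^ 2) := by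
          gcongr with f
          exacts [hz _, hxyz f]
      _ ≤ ∑ S : Finset (Fin k), √(∑ f : Fin k → α,
            (x ((S.sort (· ≤ ·)).map f) * y ((Sᶜ.sort (· ≤ ·)).map f)) ^ 2) :=
          sqrt_sum_sq_sum_le _
      _ ≤ ∑ _S : Finset (Fin k), A * √B := sum_le_sum fun S _ => hterm S
      _ = 2 ^ k * (A * √B) := by simp
  calc ∑ f : Fin k → α, z (List.ofFn f) ^ 2
      = √(∑ f : Fin k → α, z (List.ofFn f) ^ 2) ^ 2 :=
        (Real.sq_sqrt (sum_nonneg fun _ _ => sq_nonneg _)).symm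
    _ ≤ (2 ^ k * (A * √B)) ^ 2 := by gcongr
    _ = 4 ^ k * (A ^ 2 * B) := by
        rw [mul_pow, mul_pow, Real.sq_sqrt hB0, ← pow_mul, pow_mul']
        norm_num

lemma sum_range_four_pow_le {N : ℝ} (hN : 1 ≤ N) (m : ℕ) :
    ∑ k ∈ range (m + 1), (4 : ℝ) ^ k ≤ (√(2 / (4 * N - 1)) * (2 * √N) ^ (m + 1)) ^ 2 := by
  have h4N : 0 < 4 * N - 1 := by linarith
  have hNpow : N ≤ N ^ (m + 1) := le_self_pow₀ hN m.succ_ne_zero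
  have h4pow : (0 : ℝ) < 4 ^ (m + 1) := by positivity
  rw [geom_sum_eq (by norm_num), mul_pow, Real.sq_sqrt (by positivity), ← pow_mul,
    mul_comm (m + 1), pow_mul, mul_pow, Real.sq_sqrt (by linarith),
    show (2 : ℝ) ^ 2 = 4 by norm_num, mul_pow, div_mul_eq_mul_div,
    div_le_div_iff₀ (by norm_num) h4N]
  nlinarith [mul_le_mul_of_nonneg_left hNpow h4pow.le]

theorem leibniz_word_estimate_general
    {H : Type*} [NormedAddCommGroup H] [InnerProductSpace ℂ H]
    (N m : ℕ) (hN : 0 < N)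
    (X : List (Fin N) → H →L[ℂ] H)
    (v ζ : List (Fin N) → H)
    (hrel : ∀ w : List (Fin N), w.length ≤ m →
      ζ w = ∑ J : Finset (Fin w.length), X (wordSelect w J) (v (wordSelect w Jᶜ))) :
    Real.sqrt (∑ k ∈ Finset.range (m + 1),
        ∑ f : Fin k → Fin N, ‖ζ (List.ofFn f)‖ ^ 2) ≤
      Real.sqrt (2 / (4 * (N : ℝ) - 1)) * (2 * Real.sqrt N) ^ (m + 1) *
        (∑ k ∈ Finset.range (m + 1), ∑ f : Fin k → Fin N, ‖X (List.ofFn f)‖) *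
        Real.sqrt (∑ k ∈ Finset.range (m + 1),
          ∑ f : Fin k → Fin N, ‖v (List.ofFn f)‖ ^ 2) := by
  set C := √(2 / (4 * (N : ℝ) - 1)) * (2 * √N) ^ (m + 1)
  set A := ∑ k ∈ range (m + 1), ∑ f : Fin k → Fin N, ‖X (List.ofFn f)‖
  set B := ∑ k ∈ range (m + 1), ∑ f : Fin k → Fin N, ‖v (List.ofFn f)‖ ^ 2
  have hlength : ∀ k ∈ range (m + 1),
      ∑ f : Fin k → Fin N, ‖ζ (List.ofFn f)‖ ^ 2 ≤ 4 ^ k * (A ^ 2 * B) := by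
    intro k hk
    have hkm : k ≤ m := Nat.lt_succ_iff.mp (mem_range.mp hk)
    refine sum_sq_ofFn_le_four_pow (‖X ·‖) (‖v ·‖) (‖ζ ·‖) (fun _ => norm_nonneg _)
      (fun _ => norm_nonneg _)
      (fun j hj => single_le_sum (f := fun j => ∑ g : Fin j → Fin N, ‖X (List.ofFn g)‖)
        (fun _ _ => sum_nonneg fun _ _ => norm_nonneg _) (mem_range.2 (by omega)))
      (fun j hj => single_le_sum (f := fun j => ∑ g : Fin j → Fin N, ‖v (List.ofFn g)‖ ^ 2)
        (fun _ _ => sum_nonneg fun _ _ => sq_nonneg _) (mem_range.2 (by omega)))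
      fun f => ?_
    rw [hrel _ (List.length_ofFn.trans_le hkm), sum_wordSelect_ofFn f fun a b => X a (v b)]
    exact (norm_sum_le _ _).trans (sum_le_sum fun S _ => (X _).le_opNorm _)
  have hA0 : 0 ≤ A := sum_nonneg fun _ _ => sum_nonneg fun _ _ => norm_nonneg _
  have hB0 : 0 ≤ B := sum_nonneg fun _ _ => sum_nonneg fun _ _ => sq_nonneg _
  rw [Real.sqrt_le_iff]
  refine ⟨mul_nonneg (mul_nonneg (by positivity) hA0) (Real.sqrt_nonneg B), ?_⟩
  calc ∑ k ∈ range (m + 1), ∑ f : Fin k → Fin N, ‖ζ (List.ofFn f)‖ ^ 2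
      ≤ (∑ k ∈ range (m + 1), (4 : ℝ) ^ k) * (A ^ 2 * B) := by
        rw [sum_mul]; exact sum_le_sum hlength
    _ ≤ C ^ 2 * (A ^ 2 * B) := by
        gcongr
        exact sum_range_four_pow_le (by exact_mod_cast hN) m
    _ = (C * A * √B) ^ 2 := by
        rw [mul_pow (C * A), Real.sq_sqrt hB0]; ring

/-- Quantitative core of estimate (2) in Theorem 5.3 of the paper: if
`ζ_w = Σ_{J ⊆ {1,…,k}} X_{w_J}(v_{w_{Jᶜ}})` for every word `w` of length `k ≤ m` over the
alphabet `{1,…,N}`, then `(Σ_{|w|≤m} ‖ζ_w‖²)^{1/2} ≤ √(2/(4N−1)) (2√N)^{m+1}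
(Σ_{|w|≤m} ‖X_w‖) (Σ_{|w|≤m} ‖v_w‖²)^{1/2}`.  Words of length `k` are enumerated as
`List.ofFn f` for `f : Fin k → Fin N`. -/
theorem leibniz_word_estimate
    {H : Type*} [NormedAddCommGroup H] [InnerProductSpace ℂ H] [CompleteSpace H]
    (N m : ℕ) (hN : 0 < N) (hm : 0 < m)
    (X : List (Fin N) → H →L[ℂ] H)
    (v ζ : List (Fin N) → H)
    (hrel : ∀ w : List (Fin N), w.length ≤ m →
      ζ w = ∑ J : Finset (Fin w.length), X (wordSelect w J) (v (wordSelect w Jᶜ))) :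
    Real.sqrt (∑ k ∈ Finset.range (m + 1),
        ∑ f : Fin k → Fin N, ‖ζ (List.ofFn f)‖ ^ 2) ≤
      Real.sqrt (2 / (4 * (N : ℝ) - 1)) * (2 * Real.sqrt N) ^ (m + 1) *
        (∑ k ∈ Finset.range (m + 1), ∑ f : Fin k → Fin N, ‖X (List.ofFn f)‖) *
        Real.sqrt (∑ k ∈ Finset.range (m + 1),
          ∑ f : Fin k → Fin N, ‖v (List.ofFn f)‖ ^ 2) :=
  leibniz_word_estimate_general N m hN X v ζ hrel
end

section
/- Let G be a second countable, locally compact Hausdorff topological group and μ a left Haar measure on G. Let T be a bounded linear operator on the complex Hilbert space L²(G, μ) such that: (i) T commutes with the multiplication operator M_f by every bounded measurable function f : G → ℂ, i.e., T(f·ξ) = f·(Tξ) for all ξ ∈ L²(G, μ); and (ii) T commutes with the left-translation unitary u_g for every g ∈ G, where (u_g ξ)(x) = ξ(g⁻¹x). Then T is a scalar multiple of the identity operator: there exists c ∈ ℂ with T = c·I. Equivalently, the commutant of the set of operators {M_f : f ∈ L^∞(G, μ)} ∪ {u_g : g ∈ G} in B(L²(G, μ)) consists only of the scalars, so the von Neumann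 algebra generated by L^∞(G, μ) and the left-translation unitaries is all of B(L²(G, μ)). -/
/-!
Pick `W ∈ L²(G)` with `W ≠ 0` a.e. (possible since Haar measure is σ-finite). On the set where
`‖ξ‖ ≤ n ‖W‖` the quotient `ξ / W` is a bounded multiplier sending `W` to `ξ`, and these sets
exhaust `G`; hence commuting with bounded multipliers forces `T ξ = (T W / W) ξ`. Commuting with
translations makes the symbol `T W / W` a.e. invariant under every left translation, and left
translation of `G` on itself is ergodic for Haar measure, so the symbol is a.e. constant.
-/

open MeasureTheory Filter Set

theorem exists_Lp_two_ae_ne_zero {α : Type*} [MeasurableSpace α] (μ : Measure α)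
    [SigmaFinite μ] : ∃ W : Lp ℂ 2 μ, ∀ᵐ x ∂μ, W x ≠ 0 := by
  obtain ⟨g, hg_pos, hg_meas, hg_int⟩ := exists_pos_lintegral_lt_of_sigmaFinite μ one_ne_zero
  have hg : Integrable (fun x => (g x : ℝ)) μ := by
    refine ⟨hg_meas.coe_nnreal_real.aestronglyMeasurable, ?_⟩
    simpa [HasFiniteIntegral] using hg_int.trans ENNReal.one_lt_top
  have hw : MemLp (fun x => (Real.sqrt (g x) : ℂ)) 2 μ := by
    refine .ofReal ((memLp_two_iff_integrable_sq (by fun_prop)).2 (hg.congr (ae_of_all _ ?_)))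
    simp
  refine ⟨hw.toLp _, ?_⟩
  filter_upwards [hw.coeFn_toLp] with x hx
  simpa [hx] using (hg_pos x).ne'

section Multiplication

variable {α : Type*} [MeasurableSpace α] {μ : Measure α}

def CommutesWithBoundedMul (T : Lp ℂ 2 μ →L[ℂ] Lp ℂ 2 μ) : Prop :=
  ∀ (f : α → ℂ), Measurable f → (∃ C : ℝ, ∀ x, ‖f x‖ ≤ C) →
    ∀ (ξ : Lp ℂ 2 μ)
      (h₁ : MemLp (fun x => f x * ξ x) 2 μ)
      (h₂ : MemLp (fun x => f x * (T ξ) x) 2 μ),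
      T (h₁.toLp _) = h₂.toLp _

theorem memLp_two_mul_of_bounded {f : α → ℂ} (hf : Measurable f) {C : ℝ} (hC : ∀ x, ‖f x‖ ≤ C)
    (ξ : Lp ℂ 2 μ) : MemLp (fun x => f x * ξ x) 2 μ :=
  (Lp.memLp ξ).mul' (memLp_top_of_bound hf.aestronglyMeasurable C (ae_of_all _ hC))

variable {T : Lp ℂ 2 μ →L[ℂ] Lp ℂ 2 μ}

theorem CommutesWithBoundedMul.apply_ae_eq_mul (hT : CommutesWithBoundedMul T)
    {f : α → ℂ} (hf : Measurable f) {C : ℝ} (hC : ∀ x, ‖f x‖ ≤ C) {η ξ : Lp ℂ 2 μ}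
    (hη : η =ᵐ[μ] fun x => f x * ξ x) : T η =ᵐ[μ] fun x => f x * T ξ x := by
  have h₁ := memLp_two_mul_of_bounded hf hC ξ
  have h₂ := memLp_two_mul_of_bounded hf hC (T ξ)
  have hη' : η = h₁.toLp _ := Lp.ext (hη.trans h₁.coeFn_toLp.symm)
  rw [hη', hT f hf ⟨C, hC⟩ ξ h₁ h₂]
  exact h₂.coeFn_toLp

theorem CommutesWithBoundedMul.apply_ae_eq_div_mul_of_norm_le (hT : CommutesWithBoundedMul T)
    (ξ W : Lp ℂ 2 μ) (n : ℕ) :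
    ∀ᵐ x ∂μ, ‖ξ x‖ ≤ n * ‖W x‖ → T ξ x = T W x / W x * ξ x := by
  have hξ := (Lp.stronglyMeasurable ξ).measurable
  have hW := (Lp.stronglyMeasurable W).measurable
  set S := {x | ‖ξ x‖ ≤ n * ‖W x‖}
  have hS : MeasurableSet S := measurableSet_le hξ.norm (measurable_const.mul hW.norm)
  let ind : α → ℂ := S.indicator fun _ => 1
  let q : α → ℂ := S.indicator fun x => ξ x / W x
  have hind : ∀ x, ‖ind x‖ ≤ 1 := fun x => (norm_indicator_le_norm_self _ _).trans (by simp)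
  have hq : ∀ x, ‖q x‖ ≤ n := fun x => by
    by_cases hx : x ∈ S
    · simpa [q, hx] using div_le_of_le_mul₀ (norm_nonneg _) n.cast_nonneg hx
    · simp [q, hx]
  have hqW : ∀ x, q x * W x = ind x * ξ x := fun x => by
    by_cases hx : x ∈ S
    · have hξx : W x = 0 → ξ x = 0 := fun h0 => by simpa [S, h0] using hx
      simp [q, ind, hx, div_mul_cancel_of_imp hξx]
    · simp [q, ind, hx]
  have hindξ := memLp_two_mul_of_bounded (measurable_const.indicator hS) hind ξ
  have h_ind := hT.apply_ae_eq_mul (measurable_const.indicator hS) hind hindξ.coeFn_toLp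
  have h_q := hT.apply_ae_eq_mul ((hξ.div hW).indicator hS) hq
    (hindξ.coeFn_toLp.trans (ae_of_all _ fun x => (hqW x).symm))
  filter_upwards [h_ind, h_q] with x h_indx h_qx hx
  have hTξx := h_indx.symm.trans h_qx
  simp only [indicator_of_mem (show x ∈ S from hx), one_mul, Pi.div_apply] at hTξx
  rw [hTξx]
  ring

theorem CommutesWithBoundedMul.apply_ae_eq_div_mul (hT : CommutesWithBoundedMul T)
    {W : Lp ℂ 2 μ} (hW : ∀ᵐ x ∂μ, W x ≠ 0) (ξ : Lp ℂ 2 μ) :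
    T ξ =ᵐ[μ] fun x => T W x / W x * ξ x := by
  filter_upwards [ae_all_iff.2 (hT.apply_ae_eq_div_mul_of_norm_le ξ W), hW] with x hx hWx
  obtain ⟨n, hn⟩ := exists_nat_ge (‖ξ x‖ / ‖W x‖)
  exact hx n ((div_le_iff₀ (norm_pos_iff.2 hWx)).1 hn)

end Multiplication

theorem comp_inv_mul_ae_eq_of_commute_translation {G : Type*} [Group G] [MeasurableSpace G]
    [MeasurableMul G] {μ : Measure G} [μ.IsMulLeftInvariant] (T : Lp ℂ 2 μ →L[ℂ] Lp ℂ 2 μ)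
    (htrans : ∀ (g : G) (ξ : Lp ℂ 2 μ)
        (h₁ : MemLp (fun x => ξ (g⁻¹ * x)) 2 μ)
        (h₂ : MemLp (fun x => (T ξ) (g⁻¹ * x)) 2 μ),
        T (h₁.toLp _) = h₂.toLp _)
    {h : G → ℂ} (hT : ∀ ξ : Lp ℂ 2 μ, T ξ =ᵐ[μ] fun x => h x * ξ x)
    {W : Lp ℂ 2 μ} (hW : ∀ᵐ x ∂μ, W x ≠ 0) (g : G) :
    (fun x => h (g⁻¹ * x)) =ᵐ[μ] h := by
  have hg := measurePreserving_mul_left μ g⁻¹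
  have h₁ : MemLp (fun x => W (g⁻¹ * x)) 2 μ := (Lp.memLp W).comp_measurePreserving hg
  have h₂ : MemLp (fun x => T W (g⁻¹ * x)) 2 μ := (Lp.memLp (T W)).comp_measurePreserving hg
  have hshift : (fun x => T W (g⁻¹ * x)) =ᵐ[μ] fun x => h x * W (g⁻¹ * x) := by
    have hT₁ := hT (h₁.toLp _)
    rw [htrans g W h₁ h₂] at hT₁
    filter_upwards [h₂.coeFn_toLp, hT₁, h₁.coeFn_toLp] with x h₂x hT₁x h₁x
    rw [← h₂x, hT₁x, h₁x]
  filter_upwards [hshift, hg.quasiMeasurePreserving.ae_eq_comp (hT W),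
    hg.quasiMeasurePreserving.ae hW] with x hx hTWx hWx
  exact mul_right_cancel₀ hWx (hTWx.symm.trans hx)

theorem ae_eq_const_of_forall_ae_eq_comp_smul (G : Type*) {α X : Type*} [MeasurableSpace α]
    {μ : Measure α} [SMul G α] [ErgodicSMul G α μ] [Nonempty X] [MeasurableSpace X]
    [MeasurableSpace.CountablySeparated X] {h : α → X} (hm : NullMeasurable h μ)
    (hinv : ∀ g : G, (fun x => h (g • x)) =ᵐ[μ] h) : ∃ c, h =ᵐ[μ] Function.const α c :=
  exists_eventuallyEq_const_of_forall_separating MeasurableSet fun U hU =>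
    eventuallyConst_set.1 <| aeconst_of_forall_preimage_smul_ae_eq G (s := h ⁻¹' U) (hm hU)
      fun g => ((hinv g).mono fun _ hx => Iff.of_eq (congrArg (· ∈ U) hx)).set_eq

theorem commutant_of_mult_and_translations_is_scalar_general
    {G : Type*} [Group G] [TopologicalSpace G] [IsTopologicalGroup G]
    [LocallyCompactSpace G] [SecondCountableTopology G]
    [MeasurableSpace G] [BorelSpace G]
    (μ : Measure G) [μ.IsHaarMeasure]
    (T : Lp ℂ 2 μ →L[ℂ] Lp ℂ 2 μ)
    (hmul : ∀ (f : G → ℂ), Measurable f → (∃ C : ℝ, ∀ x, ‖f x‖ ≤ C) →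
      ∀ (ξ : Lp ℂ 2 μ)
        (h₁ : MemLp (fun x => f x * ξ x) 2 μ)
        (h₂ : MemLp (fun x => f x * (T ξ) x) 2 μ),
        T (h₁.toLp _) = h₂.toLp _)
    (htrans : ∀ (g : G) (ξ : Lp ℂ 2 μ)
        (h₁ : MemLp (fun x => ξ (g⁻¹ * x)) 2 μ)
        (h₂ : MemLp (fun x => (T ξ) (g⁻¹ * x)) 2 μ),
        T (h₁.toLp _) = h₂.toLp _) :
    ∃ c : ℂ, T = c • ContinuousLinearMap.id ℂ (Lp ℂ 2 μ) := by
  obtain ⟨W, hW⟩ := exists_Lp_two_ae_ne_zero μ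
  have hT := CommutesWithBoundedMul.apply_ae_eq_div_mul hmul hW
  have hm : Measurable fun x => T W x / W x :=
    (Lp.stronglyMeasurable _).measurable.div (Lp.stronglyMeasurable _).measurable
  obtain ⟨c, hc⟩ := ae_eq_const_of_forall_ae_eq_comp_smul G hm.nullMeasurable fun g => by
    simpa using comp_inv_mul_ae_eq_of_commute_translation T htrans hT hW g⁻¹
  refine ⟨c, ContinuousLinearMap.ext fun ξ => Lp.ext ?_⟩
  change T ξ =ᵐ[μ] ⇑(c • ξ)
  filter_upwards [hT ξ, hc, Lp.coeFn_smul c ξ] with x hTx hcx hsmul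
  rw [hsmul, hTx, hcx]
  rfl

/-- A bounded operator on `L²(G, μ)` (`μ` a left Haar measure on a second countable locally
compact group `G`) commuting with all multiplication operators by bounded measurable functions
and with all left translations is a scalar multiple of the identity: the von Neumann algebra
generated by `L^∞(G)` and the left translation unitaries is all of `B(L²(G))`
(concluding assertion of Theorem 6.1 of the paper). -/
theorem commutant_of_mult_and_translations_is_scalar
    {G : Type*} [Group G] [TopologicalSpace G] [IsTopologicalGroup G]
    [LocallyCompactSpace G] [T2Space G] [SecondCountableTopology G]
    [MeasurableSpace G] [BorelSpace G]
    (μ : Measure G) [μ.IsHaarMeasure]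
    (T : Lp ℂ 2 μ →L[ℂ] Lp ℂ 2 μ)
    (hmul : ∀ (f : G → ℂ), Measurable f → (∃ C : ℝ, ∀ x, ‖f x‖ ≤ C) →
      ∀ (ξ : Lp ℂ 2 μ)
        (h₁ : MemLp (fun x => f x * ξ x) 2 μ)
        (h₂ : MemLp (fun x => f x * (T ξ) x) 2 μ),
        T (h₁.toLp _) = h₂.toLp _)
    (htrans : ∀ (g : G) (ξ : Lp ℂ 2 μ)
        (h₁ : MemLp (fun x => ξ (g⁻¹ * x)) 2 μ)
        (h₂ : MemLp (fun x => (T ξ) (g⁻¹ * x)) 2 μ),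
        T (h₁.toLp _) = h₂.toLp _) :
    ∃ c : ℂ, T = c • ContinuousLinearMap.id ℂ (Lp ℂ 2 μ) :=
  commutant_of_mult_and_translations_is_scalar_general μ T hmul htrans
end
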